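/- The function Ent is invariant under local operations: for all k1, k2 ∈ SU(2) (2×2 unitary matrices with determinant 1) and all ψ ∈ ℂ⁴, Ent((k1⊗k2)ψ) = Ent ψ. -/

import Mathlib

open Matrix Complex

noncomputable section

/-- Pauli matrix σx. -/
def sigmaX : Matrix (Fin 2) (Fin 2) ℂ := !![0, 1; 1, 0]
/-- Pauli matrix σy. -/
def sigmaY : Matrix (Fin 2) (Fin 2) ℂ := !![0, -I; I, 0]
/-- Pauli matrix σz. -/
def sigmaZ : Matrix (Fin 2) (Fin 2) ℂ := !![1, 0; 0, -1]

/-- Kronecker product of two 2×2 complex matrices, as a 4×4 matrix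
(row-major ordering: entry ((2i+k),(2j+l)) is `A i j * B k l`). -/
def kron (A B : Matrix (Fin 2) (Fin 2) ℂ) : Matrix (Fin 4) (Fin 4) ℂ :=
  Matrix.of fun i j =>
    A ⟨i.val / 2, by have := i.isLt; omega⟩ ⟨j.val / 2, by have := j.isLt; omega⟩ *
    B ⟨i.val % 2, by have := i.isLt; omega⟩ ⟨j.val % 2, by have := j.isLt; omega⟩

/-- The matrix P = -(1/2) σy⊗σy. -/
def Pmat : Matrix (Fin 4) (Fin 4) ℂ := (-(1/2) : ℂ) • kron sigmaY sigmaY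

/-- Ent ψ = ψᵀ P ψ. -/
def Ent (ψ : Fin 4 → ℂ) : ℂ := ∑ i, ∑ j, ψ i * Pmat i j * ψ j

/-- Membership in SU(2): 2×2 unitary with determinant 1. -/
def InSU2 (k : Matrix (Fin 2) (Fin 2) ℂ) : Prop := kᴴ * k = 1 ∧ k.det = 1

open scoped Kronecker

/-! `kᵀ σy k = (det k) σy` for every 2×2 matrix `k`, so `Ent` transforms under `k1 ⊗ k2` by the
factor `det k1 · det k2`, which is `1` on SU(2). -/

theorem transpose_mul_sigmaY_mul_self (k : Matrix (Fin 2) (Fin 2) ℂ) :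
    kᵀ * sigmaY * k = k.det • sigmaY := by
  ext i j
  fin_cases i <;> fin_cases j <;>
    simp [sigmaY, det_fin_two, mul_apply, Fin.sum_univ_two] <;> ring

section kron

variable (A B C D : Matrix (Fin 2) (Fin 2) ℂ)

theorem kron_eq_reindex_kronecker :
    kron A B = reindex finProdFinEquiv finProdFinEquiv (A ⊗ₖ B) := rfl

theorem kron_mul_kron : kron A B * kron C D = kron (A * C) (B * D) := by
  simp only [kron_eq_reindex_kronecker, reindex_apply, submatrix_mul_equiv, mul_kronecker_mul]

theorem transpose_kron : (kron A B)ᵀ = kron Aᵀ Bᵀ := by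
  simp only [kron_eq_reindex_kronecker, reindex_apply, transpose_submatrix,
    kroneckerMap_transpose]

theorem kron_smul_smul (a b : ℂ) : kron (a • A) (b • B) = (a * b) • kron A B := by
  rw [kron_eq_reindex_kronecker, kron_eq_reindex_kronecker, smul_kronecker, kronecker_smul,
    smul_smul]
  rfl

end kron

theorem transpose_kron_mul_Pmat_mul_kron (k1 k2 : Matrix (Fin 2) (Fin 2) ℂ) :
    (kron k1 k2)ᵀ * Pmat * kron k1 k2 = (k1.det * k2.det) • Pmat := by
  rw [Pmat, Matrix.mul_smul, Matrix.smul_mul, transpose_kron, kron_mul_kron, kron_mul_kron,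
    transpose_mul_sigmaY_mul_self, transpose_mul_sigmaY_mul_self, kron_smul_smul, smul_comm]

theorem Ent_eq_dotProduct (ψ : Fin 4 → ℂ) : Ent ψ = ψ ⬝ᵥ (Pmat *ᵥ ψ) := by
  simp only [Ent, dotProduct, mulVec, Finset.mul_sum, mul_assoc]

theorem Ent_mulVec (M : Matrix (Fin 4) (Fin 4) ℂ) (ψ : Fin 4 → ℂ) :
    Ent (M *ᵥ ψ) = ψ ⬝ᵥ ((Mᵀ * Pmat * M) *ᵥ ψ) := by
  rw [Ent_eq_dotProduct, ← mulVec_mulVec, ← mulVec_mulVec, mulVec_transpose,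
    dotProduct_comm ψ, ← dotProduct_mulVec, dotProduct_comm]

theorem Ent_kron_mulVec (k1 k2 : Matrix (Fin 2) (Fin 2) ℂ) (ψ : Fin 4 → ℂ) :
    Ent (kron k1 k2 *ᵥ ψ) = k1.det * k2.det * Ent ψ := by
  rw [Ent_mulVec, transpose_kron_mul_Pmat_mul_kron, smul_mulVec, dotProduct_smul,
    Ent_eq_dotProduct, smul_eq_mul]

theorem ent_local_invariant (k1 k2 : Matrix (Fin 2) (Fin 2) ℂ)
    (h1 : InSU2 k1) (h2 : InSU2 k2) (ψ : Fin 4 → ℂ) :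
    Ent ((kron k1 k2).mulVec ψ) = Ent ψ := by
  rw [Ent_kron_mulVec, h1.2, h2.2, one_mul, one_mul]

end
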